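/- arXiv:2305.06449 — 8 statements merged into one kernel-verified Lean document; each statement's English description precedes it below -/
import Mathlib

section
/- For every real number δ with 0 < δ < 1/(2 sin(π/7)) − 1, the function g(z) := −1/(2δ) + 1/(4δ sin((1−z)π/6)) − z satisfies g(0) = 0, g'(0) ≥ 0, and g''(z) ≥ 0 for z in [0, 1 − (6/π) arcsin(1/(2(1+δ)))]; consequently g(z) ≥ 0 on this interval. -/
/-!
Write `s(z) = sin ((1 - z) π / 6)` and `c(z) = cos ((1 - z) π / 6)`. Then
`g' = π c / (24 δ s²) - 1` and `g'' = π² (1 + c²) / (144 δ s³)`, which is nonnegative as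
long as `s > 0`, i.e. for `z < 1`; the right end of the interval is below `1` because the
arcsine is positive. At `0` we have `s = 1/2` and `c = √3/2`, so `g(0) = 0` and
`g'(0) = √3 π / (12 δ) - 1`, which is nonnegative because the hypothesis on `δ` forces
`δ < 0.2`. Convexity then gives `g' ≥ g'(0) ≥ 0` and `g ≥ g(0) = 0` on the interval.
-/

open Real Set Filter Topology

theorem monotoneOn_Icc_of_hasDerivAt_nonneg {f f' : ℝ → ℝ} {a b : ℝ}
    (hf : ∀ x ∈ Icc a b, HasDerivAt f (f' x) x) (hf' : ∀ x ∈ Icc a b, 0 ≤ f' x) :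
    MonotoneOn f (Icc a b) :=
  monotoneOn_of_hasDerivWithinAt_nonneg (convex_Icc a b)
    (fun x hx => (hf x hx).continuousAt.continuousWithinAt)
    (fun x hx => (hf x (interior_subset hx)).hasDerivWithinAt)
    (fun x hx => hf' x (interior_subset hx))

theorem monotoneOn_Icc_of_deriv_left_nonneg_of_deriv2_nonneg {f f' f'' : ℝ → ℝ} {a b : ℝ}
    (hf : ∀ x ∈ Icc a b, HasDerivAt f (f' x) x)
    (hf' : ∀ x ∈ Icc a b, HasDerivAt f' (f'' x) x) (hf'' : ∀ x ∈ Icc a b, 0 ≤ f'' x)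
    (ha : 0 ≤ f' a) : MonotoneOn f (Icc a b) := by
  have hmono := monotoneOn_Icc_of_hasDerivAt_nonneg hf' hf''
  exact monotoneOn_Icc_of_hasDerivAt_nonneg hf fun x hx =>
    ha.trans (hmono ⟨le_rfl, hx.1.trans hx.2⟩ hx hx.1)

theorem hasDerivAt_one_div_sin {x : ℝ} (hx : sin x ≠ 0) :
    HasDerivAt (fun t => 1 / sin t) (-(cos x / sin x ^ 2)) x :=
  ((hasDerivAt_const x (1 : ℝ)).fun_div (hasDerivAt_sin x) hx).congr_deriv (by ring)

theorem hasDerivAt_cos_div_sin_sq {x : ℝ} (hx : sin x ≠ 0) :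
    HasDerivAt (fun t => cos t / sin t ^ 2) (-((1 + cos x ^ 2) / sin x ^ 3)) x := by
  refine ((hasDerivAt_cos x).fun_div ((hasDerivAt_sin x).fun_pow 2)
    (pow_ne_zero 2 hx)).congr_deriv ?_
  field_simp
  norm_num
  linear_combination (-sin x) * sin_sq_add_cos_sq x

theorem lt_sin_pi_div_seven : (0.42 : ℝ) < sin (π / 7) := by
  have hπ : 0.448 < π / 7 ∧ π / 7 < 0.45 := by constructor <;> linarith [pi_gt_d6, pi_lt_d2]
  have hcube : (π / 7) ^ 3 < 0.45 ^ 3 := pow_lt_pow_left₀ hπ.2 (by positivity) (by norm_num)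
  have hsin := sin_gt_sub_cube (x := π / 7) (by positivity)
  norm_num at hcube
  linarith

theorem twelve_mul_le_sqrt_three_mul_pi {δ : ℝ} (hδ : δ < 1 / (2 * sin (π / 7)) - 1) :
    12 * δ ≤ √3 * π := by
  have hsin := lt_sin_pi_div_seven
  have hδ' : (δ + 1) * (2 * sin (π / 7)) < 1 := (lt_div_iff₀ (by positivity)).1 (by linarith)
  have hδ'' : δ < 0.2 := by nlinarith
  have hsqrt : (1.7 : ℝ) ≤ √3 := le_sqrt_of_sq_le (by norm_num)
  nlinarith [pi_gt_three]

theorem one_sub_six_div_pi_mul_arcsin_lt_one {δ : ℝ} (hδ : -1 < δ) :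
    1 - 6 / π * arcsin (1 / (2 * (1 + δ))) < 1 := by
  have h1 : 0 < 1 + δ := by linarith
  have : 0 < arcsin (1 / (2 * (1 + δ))) := arcsin_pos.2 (by positivity)
  have : 0 < 6 / π * arcsin (1 / (2 * (1 + δ))) := by positivity
  linarith

theorem sin_one_sub_mul_pi_div_six_pos {z : ℝ} (hz : z ∈ Ioo (-5 : ℝ) 1) :
    0 < sin ((1 - z) * π / 6) := by
  apply sin_pos_of_pos_of_lt_pi
  · nlinarith [pi_pos, hz.2]
  · nlinarith [pi_pos, hz.1]

theorem hasDerivAt_one_sub_mul_pi_div_six (z : ℝ) :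
    HasDerivAt (fun z : ℝ => (1 - z) * π / 6) (-(π / 6)) z :=
  ((((hasDerivAt_id z).const_sub 1).mul_const π).div_const 6).congr_deriv (by ring)

namespace SoftDisc

noncomputable def g (δ z : ℝ) : ℝ :=
  -1 / (2 * δ) + 1 / (4 * δ * sin ((1 - z) * π / 6)) - z

noncomputable def g' (δ z : ℝ) : ℝ :=
  π / (24 * δ) * (cos ((1 - z) * π / 6) / sin ((1 - z) * π / 6) ^ 2) - 1

noncomputable def g'' (δ z : ℝ) : ℝ :=
  π ^ 2 / (144 * δ) * ((1 + cos ((1 - z) * π / 6) ^ 2) / sin ((1 - z) * π / 6) ^ 3)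

variable {δ z : ℝ}

theorem g_zero (δ : ℝ) : g δ 0 = 0 := by
  simp only [g, sub_zero, one_mul, sin_pi_div_six]
  ring

theorem g'_zero : g' δ 0 = √3 * π / (12 * δ) - 1 := by
  simp only [g', sub_zero, one_mul, sin_pi_div_six, cos_pi_div_six]
  ring

theorem hasDerivAt_g (hz : z ∈ Ioo (-5 : ℝ) 1) : HasDerivAt (g δ) (g' δ z) z := by
  have hcsc := (hasDerivAt_one_div_sin (sin_one_sub_mul_pi_div_six_pos hz).ne').comp z
    (hasDerivAt_one_sub_mul_pi_div_six z)
  have h := ((hcsc.const_mul (1 / (4 * δ))).const_add (-1 / (2 * δ))).sub (hasDerivAt_id z)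
  simp only [Function.comp_def, one_div_mul_one_div] at h
  exact h.congr_deriv (by simp only [g']; ring)

theorem hasDerivAt_g' (hz : z ∈ Ioo (-5 : ℝ) 1) : HasDerivAt (g' δ) (g'' δ z) z := by
  have hcot := (hasDerivAt_cos_div_sin_sq (sin_one_sub_mul_pi_div_six_pos hz).ne').comp z
    (hasDerivAt_one_sub_mul_pi_div_six z)
  exact ((hcot.const_mul (π / (24 * δ))).sub_const 1).congr_deriv (by simp only [g'']; ring)

theorem deriv_g (hz : z ∈ Ioo (-5 : ℝ) 1) : deriv (g δ) z = g' δ z :=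
  (hasDerivAt_g hz).deriv

theorem deriv_deriv_g (hz : z ∈ Ioo (-5 : ℝ) 1) : deriv (deriv (g δ)) z = g'' δ z := by
  have hev : deriv (g δ) =ᶠ[𝓝 z] g' δ :=
    eventually_of_mem (isOpen_Ioo.mem_nhds hz) fun _ hw => deriv_g hw
  rw [hev.deriv_eq, (hasDerivAt_g' hz).deriv]

theorem g''_nonneg (hδ : 0 < δ) (hz : z ∈ Ioo (-5 : ℝ) 1) : 0 ≤ g'' δ z := by
  have := sin_one_sub_mul_pi_div_six_pos hz
  unfold g''
  positivity

theorem g'_zero_nonneg (hδ0 : 0 < δ) (hδ1 : δ < 1 / (2 * sin (π / 7)) - 1) :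
    0 ≤ g' δ 0 := by
  rw [g'_zero, sub_nonneg, le_div_iff₀ (by positivity), one_mul]
  exact twelve_mul_le_sqrt_three_mul_pi hδ1

end SoftDisc

theorem soft_disc_g_nonneg (δ : ℝ) (hδ0 : 0 < δ)
    (hδ1 : δ < 1 / (2 * Real.sin (π / 7)) - 1)
    (g : ℝ → ℝ)
    (hg : ∀ z : ℝ, g z = -1 / (2 * δ) + 1 / (4 * δ * Real.sin ((1 - z) * π / 6)) - z) :
    g 0 = 0 ∧ deriv g 0 ≥ 0 ∧
    (∀ z ∈ Icc (0 : ℝ) (1 - (6 / π) * Real.arcsin (1 / (2 * (1 + δ)))),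
      deriv (deriv g) z ≥ 0) ∧
    (∀ z ∈ Icc (0 : ℝ) (1 - (6 / π) * Real.arcsin (1 / (2 * (1 + δ)))),
      g z ≥ 0) := by
  obtain rfl : g = SoftDisc.g δ := funext hg
  set b := 1 - (6 / π) * arcsin (1 / (2 * (1 + δ)))
  have hb : b < 1 := one_sub_six_div_pi_mul_arcsin_lt_one (by linarith)
  have hIcc : ∀ z ∈ Icc 0 b, z ∈ Ioo (-5 : ℝ) 1 := fun z hz =>
    ⟨by linarith [hz.1], hz.2.trans_lt hb⟩
  have hmono : MonotoneOn (SoftDisc.g δ) (Icc 0 b) :=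
    monotoneOn_Icc_of_deriv_left_nonneg_of_deriv2_nonneg
      (fun z hz => SoftDisc.hasDerivAt_g (hIcc z hz))
      (fun z hz => SoftDisc.hasDerivAt_g' (hIcc z hz))
      (fun z hz => SoftDisc.g''_nonneg hδ0 (hIcc z hz)) (SoftDisc.g'_zero_nonneg hδ0 hδ1)
  refine ⟨SoftDisc.g_zero δ, ?_, fun z hz => ?_, fun z hz => ?_⟩
  · rw [SoftDisc.deriv_g (by norm_num)]
    exact SoftDisc.g'_zero_nonneg hδ0 hδ1
  · rw [SoftDisc.deriv_deriv_g (hIcc z hz)]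
    exact SoftDisc.g''_nonneg hδ0 (hIcc z hz)
  · rw [ge_iff_le, ← SoftDisc.g_zero δ]
    exact hmono ⟨le_rfl, hz.1.trans hz.2⟩ hz hz.1
end

section
/- For α ∈ (0, π/3] and ᾱ ∈ [α/2, α), the function f(ᾱ) := sin ᾱ + cos ᾱ · tan(α − ᾱ) is decreasing in ᾱ on [α/2, α), and its maximum value is f(α/2) = 2 sin(α/2). -/
open Real Set

private lemma f_key (α : ℝ) (hα0 : 0 < α) (hα1 : α ≤ π / 3) {x : ℝ}
    (hx : x ∈ Set.Ico (α / 2) α) :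
    Real.sin x + Real.cos x * Real.tan (α - x) = Real.sin α / Real.cos (α - x) := by
  have hpi : (0:ℝ) < π := Real.pi_pos
  have hc : 0 < Real.cos (α - x) := by
    apply Real.cos_pos_of_mem_Ioo
    constructor
    · nlinarith [hx.2]
    · nlinarith [hx.1]
  rw [Real.tan_eq_sin_div_cos]
  field_simp
  rw [← Real.sin_add]
  ring_nf

theorem f_strictAnti_max (α : ℝ) (hα : α ∈ Set.Ioc 0 (π / 3))
    (f : ℝ → ℝ)
    (hf : ∀ x : ℝ, f x = Real.sin x + Real.cos x * Real.tan (α - x)) :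
    StrictAntiOn f (Set.Ico (α / 2) α) ∧
    (∀ x ∈ Set.Ico (α / 2) α, f x ≤ f (α / 2)) ∧
    f (α / 2) = 2 * Real.sin (α / 2) := by
  obtain ⟨hα0, hα1⟩ := hα
  have hpi : (0:ℝ) < π := Real.pi_pos
  have hsin : 0 < Real.sin α := Real.sin_pos_of_pos_of_lt_pi hα0 (by nlinarith)
  have hanti : StrictAntiOn f (Set.Ico (α / 2) α) := by
    intro x hx y hy hxy
    rw [hf, hf, f_key α hα0 hα1 hx, f_key α hα0 hα1 hy]
    have hcx : 0 < Real.cos (α - x) := by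
      apply Real.cos_pos_of_mem_Ioo
      constructor
      · nlinarith [hx.2]
      · nlinarith [hx.1]
    have hlt : Real.cos (α - x) < Real.cos (α - y) := by
      apply Real.cos_lt_cos_of_nonneg_of_le_pi
      · linarith [hy.2]
      · nlinarith [hx.1]
      · linarith
    exact div_lt_div_of_pos_left hsin hcx hlt
  have hmem : α / 2 ∈ Set.Ico (α / 2) α := ⟨le_refl _, by linarith⟩
  refine ⟨hanti, ?_, ?_⟩
  · intro x hx
    rcases eq_or_lt_of_le hx.1 with h | h
    · rw [← h]
    · exact le_of_lt (hanti hmem hx h)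
  · rw [hf, f_key α hα0 hα1 hmem]
    have hc : Real.cos (α / 2) ≠ 0 := by
      have : 0 < Real.cos (α / 2) := by
        apply Real.cos_pos_of_mem_Ioo
        constructor <;> nlinarith
      linarith
    have : Real.sin α = 2 * Real.sin (α / 2) * Real.cos (α / 2) := by
      rw [show α = 2 * (α / 2) by ring, Real.sin_two_mul]
      ring_nf
    rw [this]
    have : α - α / 2 = α / 2 := by ring
    rw [this]
    field_simp
end

section
/- Let δ satisfy 0 < δ < 1/(2 sin(π/7)) − 1. If x ∈ ℝ² and x₁, …, x_J ∈ ℝ² are distinct points with 1 ≤ |x − x_j| ≤ 1+δ for all j and |x_i − x_j| ≥ 1 for all i ≠ j, then J ≤ 6. -/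
open Real

/-!
Put `x` at the origin and read the points as complex numbers `z_j` with `1 ≤ |z_j| < R`, where
`R = 1 / (2 sin (π/7))`. By the law of cosines, `|z_i - z_j| ≥ 1` forces
`cos (arg z_i - arg z_j) < 1 - 2 sin² (π/7) = cos (2π/7)`, because `(r - s)² + r s / R² < 1` on
`[1, R)²` as long as `R` is below the golden ratio. Seven directions pairwise more than `2π/7`
apart do not fit on the circle.
-/

lemma one_lt_four_mul_sin_pi_div_seven_sq_add :
    1 < 4 * sin (π / 7) ^ 2 + 2 * sin (π / 7) := by
  have hlo : 0.448 < π / 7 := by linarith [pi_gt_d6]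
  have hhi : π / 7 < 0.45 := by linarith [pi_lt_d2]
  have hsin := sin_gt_sub_cube (x := π / 7) (by positivity)
  have hcube : (π / 7) ^ 3 < 0.45 ^ 3 := by gcongr
  nlinarith

theorem Complex.norm_sub_sq_eq (z w : ℂ) :
    ‖z - w‖ ^ 2 = ‖z‖ ^ 2 + ‖w‖ ^ 2 - 2 * ‖z‖ * ‖w‖ * Real.cos (arg z - arg w) := by
  have hinner : z.re * w.re + z.im * w.im = ‖z‖ * ‖w‖ * Real.cos (arg z - arg w) := by
    rw [Real.cos_sub, ← norm_mul_cos_arg z, ← norm_mul_cos_arg w, ← norm_mul_sin_arg z,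
      ← norm_mul_sin_arg w]
    ring
  rw [Complex.sq_norm, Complex.sq_norm, Complex.sq_norm, Complex.normSq_apply,
    Complex.normSq_apply, Complex.normSq_apply, Complex.sub_re, Complex.sub_im]
  linarith

lemma sub_sq_add_four_mul_mul_sq_lt_one {t r s : ℝ} (ht : 0 < t) (ht' : 1 < 4 * t ^ 2 + 2 * t)
    (hr : 1 ≤ r) (hs : 1 ≤ s) (hrt : 2 * r * t < 1) (hst : 2 * s * t < 1) :
    (r - s) ^ 2 + 4 * r * s * t ^ 2 < 1 := by
  wlog hsr : s ≤ r generalizing r s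
  · linarith [this hs hr hst hrt (by linarith)]
  -- with `u = 2st` and `b = 2t(r - s) ∈ [0, 1 - u)` the claim times `4t²` reads
  -- `b² + 4t²ub + 4t²u² < 4t²`: the left side increases in `b`, and at `b = 1 - u` it is
  -- `(1 - u)² + 4t²u ≤ 4t²` because `1 - u ≤ 1 - 2t < 4t²`
  have hu : 1 - 2 * s * t ≤ 4 * t ^ 2 := by nlinarith
  have hb : 0 < 1 - 2 * s * t - 2 * t * (r - s) := by linarith
  have h4t : 0 < 4 * t ^ 2 := by positivity
  refine lt_of_mul_lt_mul_left (a := 4 * t ^ 2) ?_ h4t.le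
  have hb' : 0 < 1 - 2 * s * t + 2 * t * (r - s) + 8 * t ^ 3 * s := by
    nlinarith [mul_nonneg ht.le (sub_nonneg.2 hsr), mul_pos (pow_pos ht 3) (by linarith : 0 < s)]
  nlinarith [mul_pos hb hb',
    mul_nonneg (by linarith : 0 ≤ 1 - 2 * s * t) (by linarith : 0 ≤ 4 * t ^ 2 - (1 - 2 * s * t))]

theorem Complex.cos_arg_sub_lt {t : ℝ} (ht : 0 < t) (ht' : 1 < 4 * t ^ 2 + 2 * t) {z w : ℂ}
    (hz : 1 ≤ ‖z‖) (hw : 1 ≤ ‖w‖) (hzt : 2 * ‖z‖ * t < 1) (hwt : 2 * ‖w‖ * t < 1)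
    (hzw : 1 ≤ ‖z - w‖) : Real.cos (arg z - arg w) < 1 - 2 * t ^ 2 := by
  have hlaw := Complex.norm_sub_sq_eq z w
  have harith := sub_sq_add_four_mul_mul_sq_lt_one ht ht' hz hw hzt hwt
  have hzw' : 0 < 2 * ‖z‖ * ‖w‖ := by positivity
  nlinarith

lemma lt_and_lt_two_pi_sub_of_cos_lt_cos {c d : ℝ} (hcπ : c ≤ π) (hd : 0 ≤ d)
    (hd' : d ≤ 2 * π) (h : cos d < cos c) : c < d ∧ d < 2 * π - c := by
  constructor
  · by_contra! hdc
    exact h.not_ge (cos_le_cos_of_nonneg_of_le_pi hd hcπ hdc)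
  · by_contra! hcd
    rw [← cos_two_pi_sub] at h
    exact h.not_ge (cos_le_cos_of_nonneg_of_le_pi (by linarith) hcπ (by linarith))

lemma exists_ne_cos_two_pi_div_le_cos_sub_of_mem_Ico {n : ℕ} (hn : 2 ≤ n) {θ : Fin n → ℝ}
    (hθ : ∀ i, θ i ∈ Set.Ico 0 (2 * π)) : ∃ i j, i ≠ j ∧ cos (2 * π / n) ≤ cos (θ i - θ j) := by
  by_contra! hcos
  set c := 2 * π / n
  have hn' : (2 : ℝ) ≤ n := by exact_mod_cast hn
  have hcπ : c ≤ π := by rw [div_le_iff₀ (by linarith)]; nlinarith [pi_pos]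
  set g := θ ∘ Tuple.sort θ
  have hgap : ∀ i j, i < j → c < g j - g i ∧ g j - g i < 2 * π - c := fun i j hij => by
    have hmono := Tuple.monotone_sort θ hij.le
    simp only [g, Function.comp_apply] at hmono ⊢
    refine lt_and_lt_two_pi_sub_of_cos_lt_cos hcπ (by linarith) ?_ ?_
    · linarith [(hθ (Tuple.sort θ j)).2, (hθ (Tuple.sort θ i)).1]
    · exact hcos _ _ ((Tuple.sort θ).injective.ne hij.ne')
  -- consecutive sorted angles are more than `c` apart, yet the first and last less than `2π - c`
  have htele : ∀ k (hk : k < n), k * c ≤ g ⟨k, hk⟩ - g ⟨0, by omega⟩ := by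
    intro k
    induction k with
    | zero => simp
    | succ k ih =>
      intro hk
      have := (hgap ⟨k, by omega⟩ ⟨k + 1, hk⟩ (by simp [Fin.lt_def])).1
      push_cast
      linarith [ih (by omega)]
  have hlast := htele (n - 1) (by omega)
  have hwrap := (hgap ⟨0, by omega⟩ ⟨n - 1, by omega⟩ (by simp [Fin.lt_def]; omega)).2
  have hnc : n * c = 2 * π := by simp only [c]; field_simp
  rw [Nat.cast_sub (by omega), Nat.cast_one] at hlast
  linarith

lemma exists_ne_cos_two_pi_div_le_cos_sub {n : ℕ} (hn : 2 ≤ n) (θ : Fin n → ℝ) :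
    ∃ i j, i ≠ j ∧ cos (2 * π / n) ≤ cos (θ i - θ j) := by
  let m i := toIcoDiv two_pi_pos 0 (θ i)
  obtain ⟨i, j, hij, hcos⟩ := exists_ne_cos_two_pi_div_le_cos_sub_of_mem_Ico hn
    (θ := fun i => toIcoMod two_pi_pos 0 (θ i))
    fun i => by simpa using toIcoMod_mem_Ico two_pi_pos 0 (θ i)
  refine ⟨i, j, hij, ?_⟩
  have hi := toIcoMod_sub_self_eq_mul two_pi_pos 0 (θ i)
  have hj := toIcoMod_sub_self_eq_mul two_pi_pos 0 (θ j)
  rwa [show toIcoMod two_pi_pos 0 (θ i) - toIcoMod two_pi_pos 0 (θ j)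
      = θ i - θ j - ((m i - m j : ℤ) : ℝ) * (2 * π) by push_cast; linarith,
    cos_sub_int_mul_two_pi] at hcos

theorem at_most_six_neighbors_general (δ : ℝ)
    (hδ1 : δ < 1 / (2 * Real.sin (π / 7)) - 1)
    (x : EuclideanSpace ℝ (Fin 2)) (J : ℕ)
    (p : Fin J → EuclideanSpace ℝ (Fin 2))
    (hnear : ∀ j, 1 ≤ dist x (p j) ∧ dist x (p j) ≤ 1 + δ)
    (hsep : ∀ i j, i ≠ j → 1 ≤ dist (p i) (p j)) :
    J ≤ 6 := by
  by_contra! hJ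
  set t := sin (π / 7)
  have ht : 0 < t := sin_pos_of_pos_of_lt_pi (by positivity) (by linarith [pi_pos])
  have hδt : 2 * (1 + δ) * t < 1 := by
    rw [lt_sub_iff_add_lt, lt_div_iff₀ (by positivity)] at hδ1
    linarith
  let q : Fin 7 → Fin J := Fin.castLE hJ
  let z : Fin 7 → ℂ := fun k => Complex.orthonormalBasisOneI.repr.symm (p (q k) - x)
  have hz : ∀ k, ‖z k‖ = dist x (p (q k)) := fun k => by
    rw [LinearIsometryEquiv.norm_map, dist_comm, dist_eq_norm]
  have hzz : ∀ k l, ‖z k - z l‖ = dist (p (q k)) (p (q l)) := fun k l => by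
    rw [← map_sub, LinearIsometryEquiv.norm_map, sub_sub_sub_cancel_right, dist_eq_norm]
  have hzt : ∀ k, 2 * ‖z k‖ * t < 1 := fun k => by
    rw [hz]; nlinarith [(hnear (q k)).2]
  obtain ⟨k, l, hkl, hcos⟩ := exists_ne_cos_two_pi_div_le_cos_sub (by norm_num : 2 ≤ 7)
    fun k => (z k).arg
  have hsep' := hsep (q k) (q l) ((Fin.castLE_injective hJ).ne hkl)
  have hlt := Complex.cos_arg_sub_lt ht one_lt_four_mul_sin_pi_div_seven_sq_add
    ((hz k).symm ▸ (hnear _).1) ((hz l).symm ▸ (hnear _).1) (hzt k) (hzt l)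
    ((hzz k l).symm ▸ hsep')
  rw [show (2 : ℝ) * π / (7 : ℕ) = 2 * (π / 7) by push_cast; ring,
    cos_two_mul_eq_one_sub] at hcos
  linarith

theorem at_most_six_neighbors (δ : ℝ) (hδ0 : 0 < δ)
    (hδ1 : δ < 1 / (2 * Real.sin (π / 7)) - 1)
    (x : EuclideanSpace ℝ (Fin 2)) (J : ℕ)
    (p : Fin J → EuclideanSpace ℝ (Fin 2)) (hinj : Function.Injective p)
    (hnear : ∀ j, 1 ≤ dist x (p j) ∧ dist x (p j) ≤ 1 + δ)
    (hsep : ∀ i j, i ≠ j → 1 ≤ dist (p i) (p j)) :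
    J ≤ 6 :=
  at_most_six_neighbors_general δ hδ1 x J p hnear hsep
end

section
/- If x, y, z ∈ ℝ² are three points with all pairwise distances in the interval [1, 1+δ] where 1+δ < 1/(2 sin(π/7)), then every angle of the triangle xyz lies strictly between π/7 and 5π/7; in particular each angle spanned at a vertex is greater than π/7. -/
open Real EuclideanGeometry

/-!
Let the sides lie in `[1, r]` with `2 r sin (π / 7) < 1`. If the angle between two sides `b, c`
were at most `π / 7`, the law of cosines would bound the opposite side by
`a² ≤ (b - c)² + 2 b c (1 - cos (π / 7)) ≤ (r - 1)² + 2 r² (1 - cos (π / 7))`, and this is `< 1`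
because Jordan's inequality `sin (π / 7) ≥ 2 / 7` forces `r < 7 / 4`, while
`2 r² (1 - cos (π / 7)) = 2 r² sin² (π / 7) / (1 + cos (π / 7)) < 1 / 3`.
So every angle exceeds `π / 7`, and by the angle sum each is below `π - 2π / 7 = 5π / 7`.
-/

lemma two_div_seven_le_sin_pi_div_seven : 2 / 7 ≤ sin (π / 7) := by
  have h := mul_le_sin (x := π / 7) (by positivity) (by linarith [pi_pos])
  rwa [div_mul_div_comm, mul_comm 2 π, mul_div_mul_left _ _ pi_ne_zero] at h

lemma one_half_lt_cos_pi_div_seven : 1 / 2 < cos (π / 7) := by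
  rw [← cos_pi_div_three]
  exact cos_lt_cos_of_nonneg_of_le_pi_div_two (by positivity) (by linarith [pi_pos])
    (by linarith [pi_pos])

lemma mul_self_add_mul_self_sub_lt_one {r b c k : ℝ} (hr : 2 * r * sin (π / 7) < 1)
    (hb : b ∈ Set.Icc 1 r) (hc : c ∈ Set.Icc 1 r) (hk : cos (π / 7) ≤ k) :
    b * b + c * c - 2 * b * c * k < 1 := by
  obtain ⟨hb1, hbr⟩ := hb
  obtain ⟨hc1, hcr⟩ := hc
  have hs := two_div_seven_le_sin_pi_div_seven
  have hκ := one_half_lt_cos_pi_div_seven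
  have hκ1 := cos_le_one (π / 7)
  have hsκ := sin_sq_add_cos_sq (π / 7)
  set s := sin (π / 7)
  set κ := cos (π / 7)
  have hr74 : r < 7 / 4 := by nlinarith
  have hrκ : 2 * r ^ 2 * (1 - κ) < 1 / 3 := by
    have hrs : 2 * r ^ 2 * s ^ 2 < 1 / 2 := by
      nlinarith [mul_pos (by linarith : 0 < r) (by linarith : 0 < s)]
    nlinarith
  have hbc : (b - c) ^ 2 ≤ (r - 1) ^ 2 := by
    nlinarith [mul_nonneg (by linarith : 0 ≤ r - 1 - b + c) (by linarith : 0 ≤ r - 1 + b - c)]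
  have hbc' : b * c ≤ r ^ 2 := by nlinarith
  calc b * b + c * c - 2 * b * c * k
      ≤ (b - c) ^ 2 + 2 * (b * c) * (1 - κ) := by
        nlinarith [mul_nonneg (by linarith : 0 ≤ b) (by linarith : 0 ≤ c)]
    _ ≤ (r - 1) ^ 2 + 2 * r ^ 2 * (1 - κ) := by gcongr
    _ < 1 := by nlinarith

section Triangle

variable {V P : Type*} [NormedAddCommGroup V] [InnerProductSpace ℝ V] [MetricSpace P]
  [NormedAddTorsor V P]

lemma pi_div_seven_lt_angle {r : ℝ} (hr : 2 * r * sin (π / 7) < 1) {p₁ p₂ p₃ : P}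
    (h₁₂ : dist p₁ p₂ ∈ Set.Icc 1 r) (h₃₂ : dist p₃ p₂ ∈ Set.Icc 1 r) (h₁₃ : 1 ≤ dist p₁ p₃) :
    π / 7 < ∠ p₁ p₂ p₃ := by
  by_contra! h
  have hcos : cos (π / 7) ≤ cos (∠ p₁ p₂ p₃) :=
    cos_le_cos_of_nonneg_of_le_pi (angle_nonneg _ _ _) (by linarith [pi_pos]) h
  have := mul_self_add_mul_self_sub_lt_one hr h₁₂ h₃₂ hcos
  rw [← law_cos] at this
  nlinarith [h₁₃]

end Triangle

theorem triangle_angle_bounds_general (δ : ℝ)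
    (hδ1 : 1 + δ < 1 / (2 * Real.sin (π / 7)))
    (x y z : EuclideanSpace ℝ (Fin 2))
    (hxy : dist x y ∈ Set.Icc (1 : ℝ) (1 + δ))
    (hyz : dist y z ∈ Set.Icc (1 : ℝ) (1 + δ))
    (hxz : dist x z ∈ Set.Icc (1 : ℝ) (1 + δ)) :
    (EuclideanGeometry.angle y x z ∈ Set.Ioo (π / 7) (5 * π / 7)) ∧
    (EuclideanGeometry.angle x y z ∈ Set.Ioo (π / 7) (5 * π / 7)) ∧
    (EuclideanGeometry.angle x z y ∈ Set.Ioo (π / 7) (5 * π / 7)) := by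
  have hr : 2 * (1 + δ) * sin (π / 7) < 1 := by
    have hsin : 0 < 2 * sin (π / 7) := by linarith [two_div_seven_le_sin_pi_div_seven]
    rw [lt_div_iff₀ hsin] at hδ1
    linarith
  have hyx : dist y x ∈ Set.Icc 1 (1 + δ) := by rwa [dist_comm] at hxy
  have hzy : dist z y ∈ Set.Icc 1 (1 + δ) := by rwa [dist_comm] at hyz
  have hzx : dist z x ∈ Set.Icc 1 (1 + δ) := by rwa [dist_comm] at hxz
  have hx := pi_div_seven_lt_angle hr hyx hzx hyz.1
  have hy := pi_div_seven_lt_angle hr hxy hzy hxz.1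
  have hz := pi_div_seven_lt_angle hr hxz hyz hxy.1
  have hsum := angle_add_angle_add_angle_eq_pi z (dist_pos.1 (by linarith [hyx.1]) : y ≠ x)
  rw [angle_comm y z x, angle_comm z x y] at hsum
  exact ⟨⟨hx, by linarith⟩, ⟨hy, by linarith⟩, ⟨hz, by linarith⟩⟩

theorem triangle_angle_bounds (δ : ℝ) (hδ0 : 0 < δ)
    (hδ1 : 1 + δ < 1 / (2 * Real.sin (π / 7)))
    (x y z : EuclideanSpace ℝ (Fin 2))
    (hxy : dist x y ∈ Set.Icc (1 : ℝ) (1 + δ))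
    (hyz : dist y z ∈ Set.Icc (1 : ℝ) (1 + δ))
    (hxz : dist x z ∈ Set.Icc (1 : ℝ) (1 + δ)) :
    (EuclideanGeometry.angle y x z ∈ Set.Ioo (π / 7) (5 * π / 7)) ∧
    (EuclideanGeometry.angle x y z ∈ Set.Ioo (π / 7) (5 * π / 7)) ∧
    (EuclideanGeometry.angle x z y ∈ Set.Ioo (π / 7) (5 * π / 7)) :=
  triangle_angle_bounds_general δ hδ1 x y z hxy hyz hxz
end

section
/- With P(N) as the boundary count of the canonical N-point configuration, for every N ∈ ℕ with N ≠ 9 and N ≥ 7, setting Ñ := N − P(N), one has P(N) ≤ P(Ñ) + 7. -/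
lemma canonical_decomp (N : ℕ) (h : 1 ≤ N) :
    ∃ s k j : ℕ, k ≤ 5 ∧ j ≤ s ∧ N = 3 * s ^ 2 + 3 * s + 1 + (s + 1) * k + j := by
  induction N, h using Nat.le_induction with
  | base => exact ⟨0, 0, 0, by norm_num⟩
  | succ n hn ih =>
    obtain ⟨s, k, j, hk, hj, hN⟩ := ih
    by_cases hjs : j < s
    · exact ⟨s, k, j + 1, hk, hjs, by rw [hN]; ring⟩
    · have hjs' : j = s := le_antisymm hj (not_lt.mp hjs)
      by_cases hk5 : k < 5
      · exact ⟨s, k + 1, 0, hk5, Nat.zero_le _, by rw [hN, hjs']; ring⟩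
      · have hk' : k = 5 := le_antisymm hk (not_lt.mp hk5)
        exact ⟨s + 1, 0, 0, by norm_num, Nat.zero_le _, by rw [hN, hjs', hk']; ring⟩

theorem canonical_boundary_count_recursive (P : ℕ → ℕ)
    (hhex : ∀ s : ℕ, P (3 * s ^ 2 + 3 * s + 1) = 6 * s)
    (hgen : ∀ s k j : ℕ, k ≤ 5 → j ≤ s → ¬(k = 0 ∧ j = 0) →
      P (3 * s ^ 2 + 3 * s + 1 + (s + 1) * k + j) = 6 * s + k + 1)
    (N : ℕ) (hN7 : 7 ≤ N) (hN9 : N ≠ 9) :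
    P N ≤ P (N - P N) + 7 := by
  obtain ⟨s, k, j, hk, hj, hN⟩ := canonical_decomp N (by omega)
  -- s ≥ 1
  obtain ⟨s', rfl⟩ : ∃ s', s = s' + 1 := by
    rcases s with _ | s'
    · exfalso; norm_num at hN; omega
    · exact ⟨s', rfl⟩
  by_cases hkj : k = 0 ∧ j = 0
  · -- hexagonal case
    obtain ⟨rfl, rfl⟩ := hkj
    have hNe : N = 3 * (s' + 1) ^ 2 + 3 * (s' + 1) + 1 := by rw [hN]; ring
    have hPN : P N = 6 * (s' + 1) := by rw [hNe, hhex]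
    have hsub : N = (3 * s' ^ 2 + 3 * s' + 1) + P N := by rw [hPN, hN]; ring
    have h2 : N - P N = 3 * s' ^ 2 + 3 * s' + 1 := Nat.sub_eq_of_eq_add hsub
    have hP2 : P (N - P N) = 6 * s' := by rw [h2]; exact hhex s'
    omega
  · have hPN : P N = 6 * (s' + 1) + k + 1 := by rw [hN, hgen _ _ _ hk hj hkj]
    rcases j with _ | j'
    · -- j = 0, so k ≥ 1
      obtain ⟨k', rfl⟩ : ∃ k', k = k' + 1 := by
        rcases k with _ | k'
        · exact absurd ⟨rfl, rfl⟩ hkj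
        · exact ⟨k', rfl⟩
      have hsub : N = (3 * s' ^ 2 + 3 * s' + 1 + (s' + 1) * k' + s') + P N := by
        rw [hPN, hN]; ring
      have h2 : N - P N = 3 * s' ^ 2 + 3 * s' + 1 + (s' + 1) * k' + s' :=
        Nat.sub_eq_of_eq_add hsub
      rcases s' with _ | s''
      · -- s' = 0 : N = 7 + 2(k'+1); k' = 0 gives N = 9
        rcases k' with _ | k''
        · exfalso; apply hN9; rw [hN]; norm_num
        · have hP2 : P (N - P N) = 6 * 0 + (k'' + 1) + 1 := by
            rw [h2]
            exact hgen 0 (k'' + 1) 0 (by omega) (le_refl _) (by omega)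
          omega
      · have hP2 : P (N - P N) = 6 * (s'' + 1) + k' + 1 := by
          rw [h2]
          exact hgen (s'' + 1) k' (s'' + 1) (by omega) (le_refl _) (by omega)
        omega
    · -- j = j' + 1
      have hsub : N = (3 * s' ^ 2 + 3 * s' + 1 + (s' + 1) * k + j') + P N := by
        rw [hPN, hN]; ring
      have h2 : N - P N = 3 * s' ^ 2 + 3 * s' + 1 + (s' + 1) * k + j' :=
        Nat.sub_eq_of_eq_add hsub
      by_cases hkj' : k = 0 ∧ j' = 0
      · obtain ⟨rfl, rfl⟩ := hkj'
        have h3 : N - P N = 3 * s' ^ 2 + 3 * s' + 1 := by rw [h2]; ring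
        have hP2 : P (N - P N) = 6 * s' := by rw [h3]; exact hhex s'
        omega
      · have hP2 : P (N - P N) = 6 * s' + k + 1 := by
          rw [h2]
          exact hgen s' k j' hk (by omega) hkj'
        omega
end

section
/- With P(N) as the boundary count of the canonical N-point configuration, for every N ∈ ℕ with N ≠ 9 and N ≥ 7, setting Ñ := N − P(N), one has P(N) ≤ P(Ñ + 1) + 6. -/
/-!
Write `N = H s + (s+1) k + j` with `H s = 3s² + 3s + 1`, `k ≤ 5`, `j ≤ s`. For `s ≥ 1`, subtracting
`P N - 1` from `N` drops the point to the same position `(k, j)` one hexagonal layer lower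
(to `(0, 1)` when `N = H s`), and on the lower layer `P` has dropped by at most `6`.
-/

theorem exists_hex_decomposition {N : ℕ} (hN : 1 ≤ N) :
    ∃ s k j, k ≤ 5 ∧ j ≤ s ∧ N = 3 * s ^ 2 + 3 * s + 1 + (s + 1) * k + j := by
  induction N, hN using Nat.le_induction with
  | base => exact ⟨0, 0, 0, by norm_num⟩
  | succ N _ ih =>
    obtain ⟨s, k, j, hk, hj, rfl⟩ := ih
    rcases Nat.lt_or_ge j s with hjs | hjs
    · exact ⟨s, k, j + 1, hk, hjs, by ring⟩
    obtain rfl : j = s := by omega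
    rcases Nat.lt_or_ge k 5 with hk5 | hk5
    · exact ⟨j, k + 1, 0, hk5, Nat.zero_le _, by ring⟩
    · obtain rfl : k = 5 := by omega
      exact ⟨j + 1, 0, 0, le_of_lt (by norm_num), Nat.zero_le _, by ring⟩

section

variable {P : ℕ → ℕ}
  (hhex : ∀ s : ℕ, P (3 * s ^ 2 + 3 * s + 1) = 6 * s)
  (hgen : ∀ s k j : ℕ, k ≤ 5 → j ≤ s → ¬(k = 0 ∧ j = 0) →
    P (3 * s ^ 2 + 3 * s + 1 + (s + 1) * k + j) = 6 * s + k + 1)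

include hhex hgen

/-- The position `j = t + 1` is past the end of the row: it is the start of row `k + 1`, or the
next hexagonal number when `k = 5`. -/
theorem six_mul_add_add_one_le_apply {t k j : ℕ} (hk : k ≤ 5) (hj : j ≤ t + 1)
    (hkj : ¬(k = 0 ∧ j = 0)) :
    6 * t + k + 1 ≤ P (3 * t ^ 2 + 3 * t + 1 + (t + 1) * k + j) := by
  rcases Nat.lt_or_ge j (t + 1) with hjt | hjt
  · exact (hgen t k j hk (by omega) hkj).ge
  obtain rfl : j = t + 1 := by omega
  rcases Nat.lt_or_ge k 5 with hk5 | hk5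
  · have h := hgen t (k + 1) 0 hk5 (Nat.zero_le t) (by omega)
    rw [show 3 * t ^ 2 + 3 * t + 1 + (t + 1) * k + (t + 1)
      = 3 * t ^ 2 + 3 * t + 1 + (t + 1) * (k + 1) + 0 by ring, h]
    omega
  · obtain rfl : k = 5 := by omega
    have h := hhex (t + 1)
    rw [show 3 * t ^ 2 + 3 * t + 1 + (t + 1) * 5 + (t + 1)
      = 3 * (t + 1) ^ 2 + 3 * (t + 1) + 1 by ring, h]
    omega

end

theorem canonical_boundary_count_recursive_succ_general (P : ℕ → ℕ)
    (hhex : ∀ s : ℕ, P (3 * s ^ 2 + 3 * s + 1) = 6 * s)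
    (hgen : ∀ s k j : ℕ, k ≤ 5 → j ≤ s → ¬(k = 0 ∧ j = 0) →
      P (3 * s ^ 2 + 3 * s + 1 + (s + 1) * k + j) = 6 * s + k + 1)
    (N : ℕ) (hN7 : 7 ≤ N) :
    P N ≤ P (N - P N + 1) + 6 := by
  obtain ⟨s, k, j, hk, hj, rfl⟩ := exists_hex_decomposition (by omega : 1 ≤ N)
  obtain ⟨t, rfl⟩ : ∃ t, s = t + 1 :=
    Nat.exists_eq_succ_of_ne_zero (by rintro rfl; ring_nf at hN7; omega)
  by_cases hkj : k = 0 ∧ j = 0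
  · obtain ⟨rfl, rfl⟩ := hkj
    have hlower := six_mul_add_add_one_le_apply hhex hgen (t := t) (k := 0) (j := 1)
      (by omega) (by omega) (by omega)
    have hdrop : 3 * (t + 1) ^ 2 + 3 * (t + 1) + 1 - 6 * (t + 1) + 1
        = 3 * t ^ 2 + 3 * t + 1 + (t + 1) * 0 + 1 := by
      ring_nf; omega
    simp only [mul_zero, add_zero, hhex, hdrop] at hlower ⊢
    omega
  · have hlower := six_mul_add_add_one_le_apply hhex hgen hk hj hkj
    have hdrop :
        3 * (t + 1) ^ 2 + 3 * (t + 1) + 1 + (t + 1 + 1) * k + j - (6 * (t + 1) + k + 1) + 1 =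
          3 * t ^ 2 + 3 * t + 1 + (t + 1) * k + j := by
      ring_nf; omega
    rw [hgen (t + 1) k j hk hj hkj, hdrop]
    omega

theorem canonical_boundary_count_recursive_succ (P : ℕ → ℕ)
    (hhex : ∀ s : ℕ, P (3 * s ^ 2 + 3 * s + 1) = 6 * s)
    (hgen : ∀ s k j : ℕ, k ≤ 5 → j ≤ s → ¬(k = 0 ∧ j = 0) →
      P (3 * s ^ 2 + 3 * s + 1 + (s + 1) * k + j) = 6 * s + k + 1)
    (N : ℕ) (hN7 : 7 ≤ N) (hN9 : N ≠ 9) :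
    P N ≤ P (N - P N + 1) + 6 :=
  canonical_boundary_count_recursive_succ_general P hhex hgen N hN7
end

section
/- Let G = (X, Ed) be a finite planar graph in the plane whose every bond has length in [1, 1+δ] with 1+δ < 1/(2 sin(π/7)). Then the number of edges incident to any fixed vertex x ∈ X is at most 6. -/
/-!
Translate so that `x` is the origin. Every neighbour `y` then has `1 ≤ ‖y‖ ≤ R := 1 + δ` and any
two neighbours are at distance at least `1`. By the law of cosines, the cosine of the angle between
two neighbours is at most `(a² + b² - 1) / (2ab)` with `a, b ∈ [1, R]`, and maximising over the square
shows that it is below `cos (2π/7)` as soon as `2 R sin (π/7) < 1`. So the angles of distinct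
neighbours are more than `2π/7` apart on the circle, which leaves room for at most six of them.
-/

open Real
open scoped InnerProductSpace

lemma sq_sub_mul_add_neg_of_mem_Icc {x y m k a : ℝ} (hx : x ^ 2 - m * x + k < 0)
    (hy : y ^ 2 - m * y + k < 0) (ha : a ∈ Set.Icc x y) : a ^ 2 - m * a + k < 0 := by
  obtain ⟨hxa, hay⟩ := ha
  rcases le_or_gt (a + x - m) 0 with h | h
  · nlinarith [mul_nonpos_of_nonneg_of_nonpos (sub_nonneg.2 hxa) h]
  · nlinarith [mul_nonpos_of_nonpos_of_nonneg (sub_nonpos.2 hay) (by linarith : 0 ≤ a + y - m)]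

lemma sq_add_sq_sub_one_lt_two_mul_mul {R c a b : ℝ} (hR : R < 2 * c)
    (hRc : 2 * R ^ 2 * (1 - c) < 1) (ha : a ∈ Set.Icc 1 R) (hb : b ∈ Set.Icc 1 R) :
    a ^ 2 + b ^ 2 - 1 < 2 * c * (a * b) := by
  have hR1 : 1 ≤ R := ha.1.trans ha.2
  have hRb : R ^ 2 - 2 * c * b * R + (b ^ 2 - 1) < 0 := by
    have := sq_sub_mul_add_neg_of_mem_Icc (m := 2 * c * R) (k := R ^ 2 - 1)
      (by nlinarith) (by nlinarith) hb
    linarith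
  have := sq_sub_mul_add_neg_of_mem_Icc (m := 2 * c * b) (k := b ^ 2 - 1)
    (by nlinarith [hb.1, hb.2]) hRb ha
  linarith

lemma real_inner_lt_cos_mul_norm_mul_norm {V : Type*} [NormedAddCommGroup V]
    [InnerProductSpace ℝ V] {α R : ℝ} (hR : R < 2 * cos α) (hRα : R < 1 / (2 * sin (α / 2)))
    {u v : V} (hu : ‖u‖ ∈ Set.Icc 1 R) (hv : ‖v‖ ∈ Set.Icc 1 R) (huv : 1 ≤ ‖u - v‖) :
    ⟪u, v⟫_ℝ < cos α * (‖u‖ * ‖v‖) := by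
  have hR1 : 1 ≤ R := hu.1.trans hu.2
  have hsin : 0 < 2 * sin (α / 2) := one_div_pos.1 (by linarith)
  have hcos : 1 - cos α = 2 * sin (α / 2) ^ 2 := by
    have h2 : cos α = 2 * cos (α / 2) ^ 2 - 1 := by rw [← cos_two_mul]; ring_nf
    linarith [sin_sq_add_cos_sq (α / 2)]
  have hRc : 2 * R ^ 2 * (1 - cos α) < 1 := by
    rw [lt_div_iff₀ hsin] at hRα
    rw [hcos]
    nlinarith [mul_pos (by linarith : (0:ℝ) < R) hsin]
  have := sq_add_sq_sub_one_lt_two_mul_mul hR hRc hu hv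
  nlinarith [norm_sub_sq_real u v]

lemma one_div_two_mul_sin_pi_div_seven_lt : 1 / (2 * sin (π / 7)) < 2 * cos (2 * π / 7) := by
  have hcos : cos (2 * π / 7) = 1 - 2 * sin (π / 7) ^ 2 := by
    rw [mul_div_assoc, cos_two_mul, cos_sq']
    ring
  have hlt : sin (π / 7) < 1 / 2 := by
    rw [← sin_pi_div_six]
    exact sin_lt_sin_of_lt_of_le_pi_div_two (by linarith [pi_pos]) (by linarith [pi_pos])
      (by linarith [pi_pos])
  have hgt : 0.31 < sin (π / 7) := by
    have := sin_gt_sub_cube (x := π / 7) (by positivity)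
    have hx : 3 / 7 < π / 7 := by linarith [pi_gt_three]
    have hx' : π / 7 < 4 / 7 := by linarith [pi_lt_four]
    nlinarith [mul_pos (mul_pos (by linarith : (0:ℝ) < π / 7) (by linarith : (0:ℝ) < π / 7))
      (by linarith : (0:ℝ) < 4 / 7 - π / 7)]
  rw [div_lt_iff₀ (by linarith), hcos]
  -- `4 s (1 - 2 s²) - 1 = (1 - 2 s) (4 s² + 2 s - 1)`, and `(√5 - 1) / 4 < 0.31 < s < 1 / 2`.
  nlinarith [mul_pos (by linarith : 0 < 1 - 2 * sin (π / 7))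
    (by nlinarith : 0 < 4 * sin (π / 7) ^ 2 + 2 * sin (π / 7) - 1)]

lemma Finset.card_sub_one_mul_le_max'_sub_min' {α : ℝ} (s : Finset ℝ) (hs : s.Nonempty)
    (h : ∀ x ∈ s, ∀ y ∈ s, x < y → α ≤ y - x) :
    ((s.card : ℝ) - 1) * α ≤ s.max' hs - s.min' hs := by
  classical
  induction s using Finset.induction_on_max with
  | empty => exact absurd hs Finset.not_nonempty_empty
  | insert a t hat ih =>
    rcases t.eq_empty_or_nonempty with rfl | ht
    · simp
    have hmax := hat _ (t.max'_mem ht)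
    have hgap : α ≤ a - t.max' ht :=
      h _ (mem_insert_of_mem (t.max'_mem ht)) _ (mem_insert_self a t) hmax
    have ih' := ih ht fun x hx y hy => h x (mem_insert_of_mem hx) y (mem_insert_of_mem hy)
    have hmin : t.min' ht ≤ a := (t.min'_le _ (t.max'_mem ht)).trans hmax.le
    rw [max'_insert a t ht, min'_insert a t ht, max_eq_left hmax.le, min_eq_right hmin,
      card_insert_of_notMem fun ha => lt_irrefl a (hat a ha)]
    push_cast
    linarith

lemma card_mul_lt_two_pi_of_cos_sub_lt {α : ℝ} (hαπ : α ≤ π) (s : Finset ℝ)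
    (hs : ∀ θ ∈ s, θ ∈ Set.Ioc (-π) π)
    (h : ∀ θ ∈ s, ∀ φ ∈ s, θ ≠ φ → cos (θ - φ) < cos α) :
    s.card * α < 2 * π := by
  rcases s.eq_empty_or_nonempty with rfl | hne
  · simp [pi_pos]
  have hgap : ∀ θ ∈ s, ∀ φ ∈ s, θ < φ → α ≤ φ - θ := by
    intro θ hθ φ hφ hlt
    by_contra! hle
    exact (h φ hφ θ hθ hlt.ne').not_ge (cos_le_cos_of_nonneg_of_le_pi (by linarith) hαπ hle.le)
  -- the wrap-around gap, from the largest angle back to the smallest, also exceeds `α`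
  have hspread : s.max' hne - s.min' hne < 2 * π - α := by
    rcases (s.min'_le _ (s.max'_mem hne)).eq_or_lt with heq | hlt
    · rw [heq, sub_self]
      linarith [pi_pos]
    have hm := hs _ (s.min'_mem hne)
    have hM := hs _ (s.max'_mem hne)
    by_contra! hle
    have hcos := h _ (s.max'_mem hne) _ (s.min'_mem hne) hlt.ne'
    rw [← cos_two_pi_sub] at hcos
    exact hcos.not_ge (cos_le_cos_of_nonneg_of_le_pi (by linarith [hm.1, hM.2]) hαπ (by linarith))
  have := s.card_sub_one_mul_le_max'_sub_min' hne hgap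
  linarith

lemma Complex.inner_eq_norm_mul_norm_mul_cos_arg_sub (z w : ℂ) :
    ⟪z, w⟫_ℝ = ‖z‖ * ‖w‖ * Real.cos (z.arg - w.arg) := by
  rw [Complex.inner, mul_re, conj_re, conj_im, Real.cos_sub, ← norm_mul_cos_arg z,
    ← norm_mul_cos_arg w, ← norm_mul_sin_arg z, ← norm_mul_sin_arg w]
  ring

lemma card_mul_lt_two_pi_of_inner_lt {ι : Type*} {α : ℝ} (hαπ : α ≤ π) (N : Finset ι)
    (z : ι → ℂ) (h : ∀ i ∈ N, ∀ j ∈ N, i ≠ j → ⟪z i, z j⟫_ℝ < cos α * (‖z i‖ * ‖z j‖)) :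
    N.card * α < 2 * π := by
  classical
  have hcos : ∀ i ∈ N, ∀ j ∈ N, i ≠ j → cos ((z i).arg - (z j).arg) < cos α := by
    intro i hi j hj hij
    have hij' := h i hi j hj hij
    rw [Complex.inner_eq_norm_mul_norm_mul_cos_arg_sub] at hij'
    have hpos : 0 < ‖z i‖ * ‖z j‖ := by
      by_contra! h0
      have : ‖z i‖ * ‖z j‖ = 0 := le_antisymm h0 (by positivity)
      simp [this] at hij'
    nlinarith
  have hinj : Set.InjOn (fun i => (z i).arg) N := by
    intro i hi j hj hij
    by_contra hne
    have := hcos i hi j hj hne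
    rw [show (z i).arg - (z j).arg = 0 by simpa [sub_eq_zero] using hij, cos_zero] at this
    exact this.not_ge (cos_le_one α)
  rw [← Finset.card_image_of_injOn hinj]
  refine card_mul_lt_two_pi_of_cos_sub_lt hαπ _ ?_ ?_
  · simp only [Finset.mem_image]
    rintro _ ⟨i, -, rfl⟩
    exact ⟨Complex.neg_pi_lt_arg _, Complex.arg_le_pi _⟩
  · simp only [Finset.mem_image]
    rintro _ ⟨i, hi, rfl⟩ _ ⟨j, hj, rfl⟩ hne
    exact hcos i hi j hj fun hij => hne (by rw [hij])

lemma ncard_incident_eq_ncard_neighbors {V : Type*} (E : Set (Sym2 V)) (x : V) :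
    {e ∈ E | x ∈ e}.ncard = {y | s(x, y) ∈ E}.ncard := by
  have himage : {e ∈ E | x ∈ e} = (fun y => s(x, y)) '' {y | s(x, y) ∈ E} := by
    ext e
    simp only [Set.mem_ofPred_eq, Set.mem_image, Sym2.mem_iff_exists]
    constructor
    · rintro ⟨he, y, rfl⟩
      exact ⟨y, he, rfl⟩
    · rintro ⟨y, he, rfl⟩
      exact ⟨he, y, rfl⟩
  rw [himage, Set.ncard_image_of_injective _ fun y z => Sym2.congr_right.1]

theorem degree_le_six_general (δ : ℝ)
    (hδ1 : 1 + δ < 1 / (2 * Real.sin (π / 7)))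
    (X : Finset (EuclideanSpace ℝ (Fin 2)))
    (hsep : ∀ x ∈ X, ∀ y ∈ X, x ≠ y → 1 ≤ dist x y)
    (Ed : Finset (Sym2 (EuclideanSpace ℝ (Fin 2))))
    (hEd' : ∀ y z : EuclideanSpace ℝ (Fin 2), s(y, z) ∈ Ed →
      y ∈ X ∧ z ∈ X ∧ 1 ≤ dist y z ∧ dist y z ≤ 1 + δ)
    (x : EuclideanSpace ℝ (Fin 2)) :
    {e ∈ (Ed : Set (Sym2 (EuclideanSpace ℝ (Fin 2)))) | x ∈ e}.ncard ≤ 6 := by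
  classical
  set N := X.filter fun y => s(x, y) ∈ Ed
  have hneighbors : {y | s(x, y) ∈ (Ed : Set _)} = (N : Set _) := by
    ext y
    simp only [Set.mem_ofPred_eq, Finset.mem_coe, N, Finset.mem_filter, iff_and_self]
    exact fun h => (hEd' x y h).2.1
  have hbond : ∀ y ∈ N, ‖y - x‖ ∈ Set.Icc 1 (1 + δ) := fun y hy => by
    rw [← dist_eq_norm, dist_comm]
    exact (hEd' x y (Finset.mem_filter.1 hy).2).2.2
  let f := Complex.orthonormalBasisOneI.repr.symm
  have hN : N.card * (2 * π / 7) < 2 * π :=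
    card_mul_lt_two_pi_of_inner_lt (by linarith [pi_pos]) N (fun y => f (y - x))
      fun y hy z hz hyz => by
        simp only [LinearIsometryEquiv.inner_map_map, LinearIsometryEquiv.norm_map]
        refine real_inner_lt_cos_mul_norm_mul_norm (hδ1.trans one_div_two_mul_sin_pi_div_seven_lt)
          (by rwa [show 2 * π / 7 / 2 = π / 7 by ring]) (hbond y hy) (hbond z hz) ?_
        rw [sub_sub_sub_cancel_right, ← dist_eq_norm]
        exact hsep y (Finset.mem_filter.1 hy).1 z (Finset.mem_filter.1 hz).1 hyz
  have hN7 : (N.card : ℝ) < 7 := by nlinarith [pi_pos]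
  rw [ncard_incident_eq_ncard_neighbors, hneighbors, Set.ncard_coe_finset]
  exact Nat.lt_succ_iff.1 (by exact_mod_cast hN7)

theorem degree_le_six (δ : ℝ) (hδ0 : 0 < δ)
    (hδ1 : 1 + δ < 1 / (2 * Real.sin (π / 7)))
    (X : Finset (EuclideanSpace ℝ (Fin 2)))
    (hsep : ∀ x ∈ X, ∀ y ∈ X, x ≠ y → 1 ≤ dist x y)
    (Ed : Finset (Sym2 (EuclideanSpace ℝ (Fin 2))))
    (hEd : ∀ e ∈ Ed, ¬ e.IsDiag)
    (hEd' : ∀ y z : EuclideanSpace ℝ (Fin 2), s(y, z) ∈ Ed →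
      y ∈ X ∧ z ∈ X ∧ 1 ≤ dist y z ∧ dist y z ≤ 1 + δ)
    (x : EuclideanSpace ℝ (Fin 2)) (hx : x ∈ X) :
    {e ∈ (Ed : Set (Sym2 (EuclideanSpace ℝ (Fin 2)))) | x ∈ e}.ncard ≤ 6 :=
  degree_le_six_general δ hδ1 X hsep Ed hEd' x
end

section
/- Let α ∈ (0, π/3), write α = (1−z)π/3 with 0 < z ≤ 1 − (6/π) arcsin(1/(2(1+δ))), and let L ≥ 1/(2 sin(α/2)). Then (1/2)𝒱^δ(L) ≥ z − 1/2, where 𝒱^δ(r) = −1 + (r−1)/δ for 1 ≤ r ≤ 1+δ and 𝒱^δ(r) = 0 for r > 1+δ, provided 0 < δ < 1/(2 sin(π/7)) − 1. -/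
/-!
Write `α / 2 = π / 6 - t` with `t = z π / 6`. Jordan's inequality `sin t ≥ 2 t / π` gives
`2 sin (α / 2) ≤ 1 - z / √3`, hence `L ≥ 1 + z / √3 ≥ 1 + 2 z δ` as soon as `δ ≤ √3 / 6`; this holds
because `sin (π / 7) > 2 / 5` forces `δ < 1 / 4`. Since `δ < 1 / 4` also gives
`arcsin (1 / (2 (1 + δ))) ≥ π / 12`, we get `z ≤ 1 / 2`. Then `𝒱^δ(L) / 2 ≥ z - 1 / 2` both where the
potential is linear (by `L ≥ 1 + 2 z δ`) and where it vanishes (by `z ≤ 1 / 2`).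
-/

open Real

/-- The soft disc potential (real-valued, for arguments `r ≥ 1`):
`-1 + (r-1)/δ` on `[1, 1+δ]` and `0` for `r > 1+δ`. -/
noncomputable def softV (δ r : ℝ) : ℝ :=
  if r ≤ 1 + δ then -1 + (r - 1) / δ else 0

lemma sub_half_le_half_softV {δ z L : ℝ} (hδ : 0 < δ) (hz : z ≤ 1 / 2)
    (hL : 1 + 2 * δ * z ≤ L) : z - 1 / 2 ≤ 1 / 2 * softV δ L := by
  unfold softV
  split_ifs
  · have : 2 * z ≤ (L - 1) / δ := by rw [le_div_iff₀ hδ]; linarith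
    linarith
  · linarith

lemma two_fifths_lt_sin_pi_div_seven : 2 / 5 < sin (π / 7) := by
  have hpos : 0 < π / 7 := by positivity
  have hlt : π / 7 < 0.45 := by linarith [pi_lt_d2]
  have hcube : (π / 7) ^ 3 < 0.45 ^ 3 := pow_lt_pow_left₀ hlt hpos.le three_ne_zero
  linarith [sin_gt_sub_cube hpos, pi_gt_three]

lemma one_div_two_sin_pi_div_seven_lt : 1 / (2 * sin (π / 7)) < 5 / 4 := by
  have hsin := two_fifths_lt_sin_pi_div_seven
  rw [div_lt_iff₀ (by linarith)]
  linarith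

lemma pi_div_twelve_le_arcsin {x : ℝ} (hx : π / 12 ≤ x) : π / 12 ≤ arcsin x := by
  have h := monotone_arcsin ((sin_le (by positivity)).trans hx)
  rwa [arcsin_sin (by linarith [pi_pos]) (by linarith [pi_pos])] at h

lemma le_half_of_le_one_sub_arcsin {x z : ℝ} (hx : π / 12 ≤ x)
    (hz : z ≤ 1 - 6 / π * arcsin x) : z ≤ 1 / 2 := by
  have h := mul_le_mul_of_nonneg_left (pi_div_twelve_le_arcsin hx)
    (by positivity : (0 : ℝ) ≤ 6 / π)
  have : 6 / π * (π / 12) = 1 / 2 := by field_simp; norm_num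
  linarith

lemma two_sin_pi_div_six_sub_le {t : ℝ} (ht0 : 0 ≤ t) (ht : t ≤ π / 2) :
    2 * sin (π / 6 - t) ≤ 1 - 2 * √3 / π * t := by
  have hjordan := mul_le_sin ht0 ht
  have hsub : sin (π / 6 - t) = 1 / 2 * cos t - √3 / 2 * sin t := by
    rw [sin_sub, sin_pi_div_six, cos_pi_div_six]
  have hscaled := mul_le_mul_of_nonneg_left hjordan (by positivity : (0 : ℝ) ≤ √3)
  have : √3 * (2 / π * t) = 2 * √3 / π * t := by ring
  linarith [cos_le_one t]

lemma one_add_two_mul_le_one_div_two_sin {c z : ℝ} (hc0 : 0 ≤ c) (hc : c ≤ √3 / 6) (hz0 : 0 ≤ z)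
    (hz : z ≤ 1 / 2) : 1 + 2 * c * z ≤ 1 / (2 * sin ((1 - z) * π / 6)) := by
  have hangle : (1 - z) * π / 6 = π / 6 - z * π / 6 := by ring
  have hbound := two_sin_pi_div_six_sub_le (t := z * π / 6) (by positivity)
    (by nlinarith [pi_pos])
  have hslope : 2 * √3 / π * (z * π / 6) = √3 / 3 * z := by field_simp; ring
  rw [← hangle, hslope] at hbound
  have hsin : 0 < sin ((1 - z) * π / 6) :=
    sin_pos_of_pos_of_lt_pi (by nlinarith [pi_pos]) (by nlinarith [pi_pos])
  have hsqrt3 : √3 < 2 := by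
    rw [sqrt_lt' two_pos]; norm_num
  rw [le_div_iff₀ (by positivity)]
  calc (1 + 2 * c * z) * (2 * sin ((1 - z) * π / 6))
      ≤ (1 + 2 * c * z) * (1 - √3 / 3 * z) := by gcongr
    _ ≤ 1 := by nlinarith [mul_nonneg (mul_nonneg hc0 hz0) hz0, sqrt_nonneg 3]

lemma one_fourth_le_sqrt_three_div_six : (1 : ℝ) / 4 ≤ √3 / 6 := by
  have : (3 : ℝ) / 2 ≤ √3 := by rw [le_sqrt' (by norm_num)]; norm_num
  linarith

theorem half_potential_lower_bound_general (δ : ℝ) (hδ0 : 0 < δ)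
    (hδ1 : δ < 1 / (2 * Real.sin (π / 7)) - 1)
    (α z L : ℝ)
    (hz0 : 0 < z) (hz1 : z ≤ 1 - (6 / π) * Real.arcsin (1 / (2 * (1 + δ))))
    (hαz : α = (1 - z) * π / 3)
    (hL : L ≥ 1 / (2 * Real.sin (α / 2))) :
    (1 / 2) * softV δ L ≥ z - 1 / 2 := by
  have hδ4 : δ < 1 / 4 := by linarith [one_div_two_sin_pi_div_seven_lt]
  have harg : π / 12 ≤ 1 / (2 * (1 + δ)) := by
    rw [le_div_iff₀ (by linarith)]; nlinarith [pi_lt_four]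
  have hz2 := le_half_of_le_one_sub_arcsin harg hz1
  have hhalf : α / 2 = (1 - z) * π / 6 := by rw [hαz]; ring
  have hδ6 : δ ≤ √3 / 6 := hδ4.le.trans one_fourth_le_sqrt_three_div_six
  rw [hhalf] at hL
  exact sub_half_le_half_softV hδ0 hz2
    ((one_add_two_mul_le_one_div_two_sin hδ0.le hδ6 hz0.le hz2).trans hL)

theorem half_potential_lower_bound (δ : ℝ) (hδ0 : 0 < δ)
    (hδ1 : δ < 1 / (2 * Real.sin (π / 7)) - 1)
    (α z L : ℝ) (hα : α ∈ Set.Ioo 0 (π / 3))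
    (hz0 : 0 < z) (hz1 : z ≤ 1 - (6 / π) * Real.arcsin (1 / (2 * (1 + δ))))
    (hαz : α = (1 - z) * π / 3)
    (hL : L ≥ 1 / (2 * Real.sin (α / 2))) :
    (1 / 2) * softV δ L ≥ z - 1 / 2 :=
  half_potential_lower_bound_general δ hδ0 hδ1 α z L hz0 hz1 hαz hL
end
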